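/- arXiv:1104.0067 — 4 statements merged into one kernel-verified Lean document; each statement's English description precedes it below -/
import Mathlib

section
/- Let K be a field, V a K-vector space of dimension at most 2, Q a quadratic form on V, and x an element of the Clifford algebra of Q. Suppose x * reverse (involute x) = algebraMap d for some d : K with d ≠ 0. Then x is invertible with two-sided inverse d⁻¹ • reverse (involute x); that is, x * (d⁻¹ • reverse (involute x)) = 1 and (d⁻¹ • reverse (involute x)) * x = 1. (This is the paper's one- and two-dimensional inverse formula A⁻¹ = ⟦A⟧₁₂ / (A⟦A⟧₁₂).) -/
/-!
The hypothesis says directly that `d⁻¹ • reverse (involute x)` is a right inverse of `x`.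
If `V` is spanned by two vectors `v, w`, the relations `ι v * ι v = Q v` and
`ι w * ι v = polar Q v w - ι v * ι w` show that `1, ι v, ι w, ι v * ι w` span the Clifford
algebra, so it is finite-dimensional, hence Artinian and therefore Dedekind-finite:
a right inverse is a two-sided inverse.
-/

open CliffordAlgebra Submodule

theorem exists_span_pair_eq_top_of_finrank_le_two {K V : Type*} [DivisionRing K] [AddCommGroup V]
    [Module K V] [FiniteDimensional K V] (hdim : Module.finrank K V ≤ 2) :
    ∃ v w : V, span K {v, w} = ⊤ := by
  let b := Module.finBasis K V
  let u : Fin 2 → V := Function.extend (Fin.castLE hdim) b 0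
  refine ⟨u 0, u 1, eq_top_mono (span_mono ?_) b.span_eq⟩
  rintro _ ⟨i, rfl⟩
  have hi : b i = u (Fin.castLE hdim i) := ((Fin.castLE_injective hdim).extend_apply _ _ _).symm
  rw [hi]
  generalize Fin.castLE hdim i = j
  fin_cases j <;> simp

section Finiteness

variable {R M : Type*} [CommRing R] [AddCommGroup M] [Module R M] (Q : QuadraticForm R M)

theorem CliffordAlgebra.ι_mul_mem_span_of_span_pair_eq_top {v w : M}
    (hspan : span R {v, w} = ⊤) (m : M) {a : CliffordAlgebra Q}
    (ha : a ∈ span R {1, ι Q v, ι Q w, ι Q v * ι Q w}) :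
    ι Q m * a ∈ span R {1, ι Q v, ι Q w, ι Q v * ι Q w} := by
  set S := span R {1, ι Q v, ι Q w, ι Q v * ι Q w}
  have h1 : (1 : CliffordAlgebra Q) ∈ S := subset_span (by simp)
  have hv : ι Q v ∈ S := subset_span (by simp)
  have hw : ι Q w ∈ S := subset_span (by simp)
  have hvw : ι Q v * ι Q w ∈ S := subset_span (by simp)
  have hscalar (r : R) : algebraMap R _ r ∈ S := by
    rw [Algebra.algebraMap_eq_smul_one]; exact S.smul_mem r h1
  suffices key : ∀ u ∈ ({v, w} : Set M), ∀ b ∈ ({1, ι Q v, ι Q w, ι Q v * ι Q w} : Set _),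
      ι Q u * b ∈ S by
    have hm : m ∈ span R {v, w} := hspan ▸ mem_top
    induction hm using span_induction with
    | mem u hu =>
      induction ha using span_induction with
      | mem b hb => exact key u hu b hb
      | zero => simp
      | add _ _ _ _ h h' => rw [mul_add]; exact S.add_mem h h'
      | smul r _ _ h => rw [mul_smul_comm]; exact S.smul_mem r h
    | zero => simp
    | add _ _ _ _ h h' => rw [map_add, add_mul]; exact S.add_mem h h'
    | smul r _ _ h => rw [map_smul, smul_mul_assoc]; exact S.smul_mem r h
  rintro u (rfl | rfl) b (rfl | rfl | rfl | rfl)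
  · rw [mul_one]; exact hv
  · rw [ι_sq_scalar]; exact hscalar _
  · exact hvw
  · rw [← mul_assoc, ι_sq_scalar, ← Algebra.smul_def]; exact S.smul_mem _ hw
  · rw [mul_one]; exact hw
  · rw [ι_mul_ι_comm]; exact S.sub_mem (hscalar _) hvw
  · rw [ι_sq_scalar]; exact hscalar _
  · rw [← mul_assoc, ι_mul_ι_comm, sub_mul, mul_assoc, ι_sq_scalar, ← Algebra.smul_def,
      ← Algebra.commutes, ← Algebra.smul_def]
    exact S.sub_mem (S.smul_mem _ hw) (S.smul_mem _ hv)

theorem CliffordAlgebra.span_eq_top_of_span_pair_eq_top {v w : M} (hspan : span R {v, w} = ⊤) :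
    span R {1, ι Q v, ι Q w, ι Q v * ι Q w} = ⊤ := by
  refine eq_top_iff'.mpr fun a => ?_
  induction a using left_induction with
  | algebraMap r =>
    rw [Algebra.algebraMap_eq_smul_one]; exact smul_mem _ r (subset_span (by simp))
  | add _ _ h h' => exact add_mem h h'
  | ι_mul a m h => exact ι_mul_mem_span_of_span_pair_eq_top Q hspan m h

theorem CliffordAlgebra.finite_of_span_pair_eq_top {v w : M} (hspan : span R {v, w} = ⊤) :
    Module.Finite R (CliffordAlgebra Q) :=
  ⟨fg_def.mpr ⟨_, Set.toFinite _, span_eq_top_of_span_pair_eq_top Q hspan⟩⟩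

end Finiteness

/-- In dimension at most 2, if `x * reverse (involute x) = algebraMap d` with
`d ≠ 0`, then `d⁻¹ • reverse (involute x)` is a two-sided inverse of `x`:
the paper's inverse formula `A⁻¹ = ⟦A⟧₁₂ / (A ⟦A⟧₁₂)`. -/
theorem inv_dim_le_two (K V : Type*) [Field K] [AddCommGroup V] [Module K V]
    [FiniteDimensional K V] (hdim : Module.finrank K V ≤ 2)
    (Q : QuadraticForm K V) (x : CliffordAlgebra Q) (d : K) (hd : d ≠ 0)
    (hdet : x * reverse (involute x) = algebraMap K (CliffordAlgebra Q) d) :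
    x * (d⁻¹ • reverse (involute x)) = 1 ∧
      (d⁻¹ • reverse (involute x)) * x = 1 := by
  obtain ⟨v, w, hspan⟩ := exists_span_pair_eq_top_of_finrank_le_two hdim
  have : Module.Finite K (CliffordAlgebra Q) := finite_of_span_pair_eq_top Q hspan
  have : IsArtinianRing (CliffordAlgebra Q) := .of_finite K _
  have hright : x * (d⁻¹ • reverse (involute x)) = 1 := by
    rw [mul_smul_comm, hdet, Algebra.smul_def, ← map_mul, inv_mul_cancel₀ hd, map_one]
  exact ⟨hright, mul_eq_one_comm.mp hright⟩
end

section
/- Let K be a field of characteristic not 2, V a K-vector space of dimension 3, and Q a quadratic form on V. Then for every element x of the Clifford algebra of Q, the product x * reverse x * involute (x * reverse x) is a scalar, i.e. it lies in the range of algebraMap K (CliffordAlgebra Q). (This is the paper's second three-dimensional determinant formula Det(A) = A⟦A⟧₂₃⟦A⟦A⟧₂₃⟧₁₄, written in reverse–inversion form as Det(A) = A · rev(A) · inv(A · rev(A)).) -/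
/-!
Put `y = x * reverse x`, so that `reverse y = y`. For an orthogonal basis `e₀, e₁, e₂` the
algebra is spanned by the ordered monomials `1, eᵢ, eᵢ eⱼ, e₀ e₁ e₂`: their span
`∏ᵢ span {1, eᵢ}` is stable under left multiplication by each `eⱼ`, which anticommutes past
the factors `i ≠ j` and is absorbed by its own factor since `eⱼ² = Q(eⱼ)`. Reversion fixes the
monomials of length `≤ 1` and negates those of length `2` and `3`, so, as `2` is invertible,
`y = c + v` has only a scalar and a vector part, and `y * involute y = (c + v)(c - v) = c² - Q v`.
-/

open CliffordAlgebra

namespace CliffordAlgebra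

variable {R M : Type*} [CommRing R] [AddCommGroup M] [Module R M] {Q : QuadraticForm R M}

theorem reverse_eq_self_of_mem_one_sup_range_ι {y : CliffordAlgebra Q}
    (hy : y ∈ 1 ⊔ LinearMap.range (ι Q)) : reverse y = y := by
  obtain ⟨s, hs, _, ⟨m, rfl⟩, rfl⟩ := Submodule.mem_sup.mp hy
  obtain ⟨c, rfl⟩ := Submodule.mem_one.mp hs
  rw [map_add, reverse.commutes, reverse_ι]

theorem mul_involute_mem_range_of_mem_one_sup_range_ι {y : CliffordAlgebra Q}
    (hy : y ∈ 1 ⊔ LinearMap.range (ι Q)) :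
    y * involute y ∈ Set.range (algebraMap R (CliffordAlgebra Q)) := by
  obtain ⟨s, hs, _, ⟨m, rfl⟩, rfl⟩ := Submodule.mem_sup.mp hy
  obtain ⟨c, rfl⟩ := Submodule.mem_one.mp hs
  refine ⟨c * c - Q m, ?_⟩
  rw [map_add, involute.commutes, involute_ι, map_sub, map_mul, ← ι_sq_scalar,
    add_mul, mul_add, mul_add, ← Algebra.commutes c (ι Q m)]
  noncomm_ring

theorem span_ι_mul_le_of_isOrtho {u v : M} (h : Q.IsOrtho u v) :
    (R ∙ ι Q v) * Submodule.span R {1, ι Q u} ≤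
      Submodule.span R {1, ι Q u} * (R ∙ ι Q v) := by
  rw [Submodule.span_mul_span, Submodule.span_mul_span]
  simp only [Set.insert_eq, Set.union_mul, Set.mul_union,
    Set.singleton_mul_singleton, mul_one, one_mul, Submodule.span_union,
    ι_mul_ι_comm_of_isOrtho h.symm, ← Set.neg_singleton, Submodule.span_neg, le_refl]

theorem span_ι_mul_span_one_ι_le (u : M) :
    (R ∙ ι Q u) * Submodule.span R {1, ι Q u} ≤ Submodule.span R {1, ι Q u} := by
  rw [Submodule.span_mul_span]
  simp only [Set.insert_eq, Set.mul_union, Set.singleton_mul_singleton, mul_one,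
    Submodule.span_union, ι_sq_scalar, Algebra.algebraMap_eq_smul_one]
  exact sup_le le_sup_right ((Submodule.span_singleton_smul_le _ _ _).trans le_sup_left)

section OrthogonalFamily

variable {n : Type*} {b : n → M}

theorem span_ι_mul_prod_span_one_ι_le (hb : Pairwise fun i j => Q.IsOrtho (b i) (b j)) {j : n} :
    ∀ {l : List n}, j ∈ l →
      (R ∙ ι Q (b j)) * (l.map fun i => Submodule.span R {1, ι Q (b i)}).prod ≤
        (l.map fun i => Submodule.span R {1, ι Q (b i)}).prod
  | i :: l, hj => by
    rw [List.map_cons, List.prod_cons, ← mul_assoc]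
    by_cases hij : i = j
    · subst hij
      exact mul_le_mul' (span_ι_mul_span_one_ι_le _) le_rfl
    · calc _ ≤ Submodule.span R {1, ι Q (b i)} * (R ∙ ι Q (b j)) *
              (l.map fun i => Submodule.span R {1, ι Q (b i)}).prod :=
            mul_le_mul' (span_ι_mul_le_of_isOrtho (hb hij)) le_rfl
        _ ≤ _ := by
            rw [mul_assoc]
            exact mul_le_mul' le_rfl (span_ι_mul_prod_span_one_ι_le hb
              ((List.mem_cons.mp hj).resolve_left (Ne.symm hij)))

theorem prod_span_one_ι_eq_top (hspan : Submodule.span R (Set.range b) = ⊤)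
    (hb : Pairwise fun i j => Q.IsOrtho (b i) (b j)) {l : List n} (hl : ∀ i, i ∈ l) :
    (l.map fun i => Submodule.span R {1, ι Q (b i)}).prod = ⊤ := by
  set T := (l.map fun i => Submodule.span R {1, ι Q (b i)}).prod
  have one_le : 1 ≤ T := List.one_le_prod_of_one_le fun A hA => by
    obtain ⟨i, -, rfl⟩ := List.mem_map.mp hA
    exact Submodule.one_le.mpr (Submodule.subset_span (Set.mem_insert _ _))
  have range_mul_le : LinearMap.range (ι Q) * T ≤ T := by
    rw [LinearMap.range_eq_map, ← hspan, Submodule.map_span, ← Set.range_comp,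
      Submodule.span_range_eq_iSup, Submodule.iSup_mul]
    exact iSup_le fun i => span_ι_mul_prod_span_one_ι_le hb (hl i)
  have pow_le (k : ℕ) : LinearMap.range (ι Q) ^ k ≤ T := by
    induction k with
    | zero => rwa [pow_zero]
    | succ k ih => exact (pow_succ' _ k).trans_le ((mul_le_mul' le_rfl ih).trans range_mul_le)
  rw [eq_top_iff, ← iSup_ι_range_eq_top]
  exact iSup_le pow_le

end OrthogonalFamily

theorem reverse_ι_mul_ι_of_isOrtho {u v : M} (h : Q.IsOrtho u v) :
    reverse (ι Q u * ι Q v) = -(ι Q u * ι Q v) := by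
  rw [reverse.map_mul, reverse_ι, reverse_ι, ι_mul_ι_comm_of_isOrtho h.symm]

theorem reverse_ι_mul_ι_mul_ι_of_isOrtho {u v w : M} (huv : Q.IsOrtho u v)
    (huw : Q.IsOrtho u w) (hvw : Q.IsOrtho v w) :
    reverse (ι Q u * (ι Q v * ι Q w)) = -(ι Q u * (ι Q v * ι Q w)) := by
  rw [reverse.map_mul, reverse_ι_mul_ι_of_isOrtho hvw, reverse_ι, neg_mul, mul_assoc,
    ι_mul_ι_comm_of_isOrtho huw.symm, mul_neg, ← mul_assoc, ι_mul_ι_comm_of_isOrtho huv.symm,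
    neg_mul, neg_neg, mul_assoc]

theorem one_sup_range_ι_sup_eqLocus_reverse_neg_eq_top {b : Fin 3 → M}
    (hspan : Submodule.span R (Set.range b) = ⊤)
    (hb : Pairwise fun i j => Q.IsOrtho (b i) (b j)) :
    1 ⊔ LinearMap.range (ι Q) ⊔ LinearMap.eqLocus reverse (-LinearMap.id) = ⊤ := by
  have hprod := prod_span_one_ι_eq_top (Q := Q) hspan hb (l := [0, 1, 2]) (by decide)
  simp only [List.map_cons, List.map_nil, List.prod_cons, List.prod_nil, mul_one,
    Submodule.span_mul_span] at hprod
  rw [eq_top_iff, ← hprod, Submodule.span_le]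
  simp only [Set.insert_eq, Set.union_mul, Set.mul_union, Set.singleton_mul_singleton, one_mul,
    mul_one, Set.union_subset_iff, Set.singleton_subset_iff, SetLike.mem_coe]
  set S := 1 ⊔ LinearMap.range (ι Q) ⊔ LinearMap.eqLocus reverse (-LinearMap.id)
  have one_mem : (1 : CliffordAlgebra Q) ∈ S :=
    Submodule.mem_sup_left (Submodule.mem_sup_left (Submodule.mem_one.mpr ⟨1, map_one _⟩))
  have vec_mem (i : Fin 3) : ι Q (b i) ∈ S :=
    Submodule.mem_sup_left (Submodule.mem_sup_right (LinearMap.mem_range_self _ _))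
  have bivec_mem {i j : Fin 3} (hij : i ≠ j) : ι Q (b i) * ι Q (b j) ∈ S :=
    Submodule.mem_sup_right (reverse_ι_mul_ι_of_isOrtho (hb hij))
  have trivec_mem : ι Q (b 0) * (ι Q (b 1) * ι Q (b 2)) ∈ S :=
    Submodule.mem_sup_right
      (reverse_ι_mul_ι_mul_ι_of_isOrtho (hb (by decide)) (hb (by decide)) (hb (by decide)))
  exact ⟨⟨⟨one_mem, vec_mem 0⟩, vec_mem 1, bivec_mem (by decide)⟩,
    ⟨vec_mem 2, bivec_mem (by decide)⟩, bivec_mem (by decide), trivec_mem⟩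

theorem mem_one_sup_range_ι_of_reverse_eq_self [Invertible (2 : R)] {b : Fin 3 → M}
    (hspan : Submodule.span R (Set.range b) = ⊤)
    (hb : Pairwise fun i j => Q.IsOrtho (b i) (b j)) {y : CliffordAlgebra Q}
    (hy : reverse y = y) : y ∈ 1 ⊔ LinearMap.range (ι Q) := by
  have hy' : y ∈ 1 ⊔ LinearMap.range (ι Q) ⊔ LinearMap.eqLocus reverse (-LinearMap.id) := by
    rw [one_sup_range_ι_sup_eqLocus_reverse_neg_eq_top hspan hb]
    exact Submodule.mem_top
  obtain ⟨p, hp, z, hz, rfl⟩ := Submodule.mem_sup.mp hy'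
  have hz_neg : -z = z := by
    rw [map_add, reverse_eq_self_of_mem_one_sup_range_ι hp, LinearMap.mem_eqLocus.mp hz] at hy
    exact add_left_cancel hy
  have hz_add : z + z = 0 := by
    nth_rewrite 1 [← hz_neg]
    exact neg_add_cancel z
  have hz_zero : z = 0 := by
    rw [← invOf_smul_smul (2 : R) z, two_smul, hz_add, smul_zero]
  rwa [hz_zero, add_zero]

end CliffordAlgebra

theorem det_dim_three_second_general (K V : Type*) [Field K] [AddCommGroup V] [Module K V]
    (h2 : (2 : K) ≠ 0)
    (hdim : Module.finrank K V = 3)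
    (Q : QuadraticForm K V) (x : CliffordAlgebra Q) :
    x * reverse x * involute (x * reverse x) ∈
      Set.range (algebraMap K (CliffordAlgebra Q)) := by
  have : FiniteDimensional K V := Module.finite_of_finrank_eq_succ hdim
  have : Invertible (2 : K) := invertibleOfNonzero h2
  obtain ⟨v, hv⟩ :=
    LinearMap.BilinForm.exists_orthogonal_basis (QuadraticForm.associated_isSymm K Q)
  let b := v.reindex (finCongr hdim)
  have hb : Pairwise fun i j => Q.IsOrtho (b i) (b j) := by
    intro i j hij
    rw [Module.Basis.reindex_apply, Module.Basis.reindex_apply]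
    exact QuadraticMap.associated_isOrtho.mp (hv ((finCongr hdim).symm.injective.ne hij))
  have hrev : reverse (x * reverse x) = x * reverse x := by
    rw [reverse.map_mul, reverse_reverse]
  exact mul_involute_mem_range_of_mem_one_sup_range_ι
    (mem_one_sup_range_ι_of_reverse_eq_self b.span_eq hb hrev)

/-- In dimension 3 (char K ≠ 2), `x * reverse x * involute (x * reverse x)`
is a scalar: the paper's second three-dimensional determinant formula
`Det(A) = A ⟦A⟧₂₃ ⟦A ⟦A⟧₂₃⟧₁₄`. -/
theorem det_dim_three_second (K V : Type*) [Field K] [AddCommGroup V] [Module K V]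
    [FiniteDimensional K V] (h2 : (2 : K) ≠ 0)
    (hdim : Module.finrank K V = 3)
    (Q : QuadraticForm K V) (x : CliffordAlgebra Q) :
    x * reverse x * involute (x * reverse x) ∈
      Set.range (algebraMap K (CliffordAlgebra Q)) :=
  det_dim_three_second_general K V h2 hdim Q x
end

section
/- Let K be a field of characteristic not 2, V a K-vector space of dimension 3, and Q a quadratic form on V. For x in the Clifford algebra of Q define its adjugate adj x := reverse x * involute x * conj x, where conj y := reverse (involute y). Then the adjugate commutes with x and their product is a scalar: x * adj x = adj x * x, and x * adj x lies in the range of algebraMap K (CliffordAlgebra Q). (This is the paper's three-dimensional adjugate Adj(A) = ⟦A⟧₂₃⟦A⟧₁₃⟦A⟧₁₂ together with the claim that the adjugate of a Clifford number commutes with the Clifford number itself, both products giving the determinant.) -/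
/-!
Take an orthogonal basis `u, v, w` of `V` and put `ω = u v w`. In odd dimension `ω` is central,
and expanding in the eight monomials shows that every element fixed by the Clifford conjugate
`x̄ = reverse (involute x)` lies in `span {1, ω}`, hence is central. So `x + x̄` is central, i.e.
`x` commutes with `x̄`, and `reverse x * involute x` (again conjugate-fixed) is central; this gives
`x * adj x = adj x * x`. Writing `x̄ x = p + q ω`, we get `reverse x * involute x =
reverse (x̄ x) = p - q ω`, so `x * adj x = (p - q ω)(p + q ω) = p² - q² ω²`, a scalar since
`ω² = -Q(u) Q(v) Q(w)`.
-/

open CliffordAlgebra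

namespace CliffordAlgebra

variable {R M : Type*} [CommRing R] [AddCommGroup M] [Module R M] {Q : QuadraticForm R M}

theorem ι_mul_ι_mul_self (a : M) (y : CliffordAlgebra Q) : ι Q a * (ι Q a * y) = Q a • y := by
  rw [← mul_assoc, ι_sq_scalar, Algebra.smul_def]

theorem reverse_involute_mul (a b : CliffordAlgebra Q) :
    reverse (involute (a * b)) = reverse (involute b) * reverse (involute a) := by
  rw [map_mul, reverse.map_mul]

theorem reverse_involute_reverse_involute (a : CliffordAlgebra Q) :
    reverse (involute (reverse (involute a))) = a := by
  rw [← reverse_involute, reverse_reverse, involute_involute]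

section OrthogonalTriple

variable {u v w : M}

theorem commute_ι_mul_ι_mul_ι (huv : Q.IsOrtho u v) (huw : Q.IsOrtho u w)
    (hvw : Q.IsOrtho v w) (hspan : Submodule.span R {u, v, w} = ⊤) (y : CliffordAlgebra Q) :
    Commute (ι Q u * ι Q v * ι Q w) y := by
  refine Algebra.commute_of_mem_adjoin_of_forall_mem_commute
    (adjoin_range_ι (Q := Q) ▸ Algebra.mem_top) ?_
  rintro _ ⟨m, rfl⟩
  have hm : m ∈ Submodule.span R {u, v, w} := hspan ▸ Submodule.mem_top
  induction hm using Submodule.span_induction with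
  | mem n hn =>
    rcases hn with rfl | rfl | rfl <;>
      simp only [Commute, SemiconjBy, mul_assoc, ι_mul_ι_comm_of_isOrtho huw.symm,
        ι_mul_ι_comm_of_isOrtho hvw.symm, ι_mul_ι_mul_of_isOrtho (h := huv.symm),
        ι_mul_ι_mul_of_isOrtho (h := huw.symm), ι_mul_ι_mul_of_isOrtho (h := hvw.symm),
        ι_sq_scalar, ι_mul_ι_mul_self, mul_neg, neg_neg, Algebra.algebraMap_eq_smul_one,
        mul_smul_comm, mul_one]
  | zero => simp
  | add _ _ _ _ h₁ h₂ => rw [map_add]; exact h₁.add_right h₂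
  | smul r _ _ h => rw [map_smul]; exact h.smul_right r

theorem mem_span_monomials (huv : Q.IsOrtho u v) (huw : Q.IsOrtho u w)
    (hvw : Q.IsOrtho v w) (hspan : Submodule.span R {u, v, w} = ⊤) (y : CliffordAlgebra Q) :
    y ∈ Submodule.span R {1, ι Q u, ι Q v, ι Q w, ι Q u * ι Q v, ι Q u * ι Q w,
      ι Q v * ι Q w, ι Q u * ι Q v * ι Q w} := by
  set S : Set (CliffordAlgebra Q) := {1, ι Q u, ι Q v, ι Q w, ι Q u * ι Q v, ι Q u * ι Q w,
    ι Q v * ι Q w, ι Q u * ι Q v * ι Q w}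
  have hι_mul (m : M) (z : CliffordAlgebra Q) (hz : z ∈ Submodule.span R S) :
      ι Q m * z ∈ Submodule.span R S := by
    have hm : m ∈ Submodule.span R {u, v, w} := hspan ▸ Submodule.mem_top
    have := Submodule.apply_mem_map₂ ((LinearMap.mul R (CliffordAlgebra Q)).comp (ι Q)) hm hz
    rw [Submodule.map₂_span_span] at this
    refine Submodule.span_le.mpr ?_ this
    rintro _ ⟨g, hg, s, hs, rfl⟩
    change ι Q g * s ∈ Submodule.span R S
    rcases hg with rfl | rfl | rfl <;>
      rcases hs with rfl | rfl | rfl | rfl | rfl | rfl | rfl | rfl <;>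
      (try simp only [mul_assoc, mul_one, ι_mul_ι_comm_of_isOrtho huv.symm,
        ι_mul_ι_comm_of_isOrtho huw.symm, ι_mul_ι_comm_of_isOrtho hvw.symm,
        ι_mul_ι_mul_of_isOrtho (h := huv.symm), ι_mul_ι_mul_of_isOrtho (h := huw.symm),
        ι_mul_ι_mul_of_isOrtho (h := hvw.symm), ι_sq_scalar, ι_mul_ι_mul_self, mul_neg,
        Algebra.algebraMap_eq_smul_one, mul_smul_comm, Submodule.neg_mem_iff]) <;>
      (try apply Submodule.smul_mem) <;>
      apply Submodule.subset_span <;>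
      simp only [S, Set.mem_insert_iff, Set.mem_singleton_iff, mul_assoc, true_or, or_true]
  induction y using left_induction with
  | algebraMap r =>
    rw [Algebra.algebraMap_eq_smul_one]
    exact Submodule.smul_mem _ _ (Submodule.subset_span (by simp [S]))
  | add _ _ h₁ h₂ => exact Submodule.add_mem _ h₁ h₂
  | ι_mul x m h => exact hι_mul m x h

theorem reverse_ι_mul_ι_mul_ι (huv : Q.IsOrtho u v) (huw : Q.IsOrtho u w)
    (hvw : Q.IsOrtho v w) : reverse (ι Q u * ι Q v * ι Q w) = -(ι Q u * ι Q v * ι Q w) := by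
  simp only [reverse.map_mul, reverse_ι, mul_assoc, ι_mul_ι_comm_of_isOrtho huw.symm,
    ι_mul_ι_comm_of_isOrtho hvw.symm, ι_mul_ι_mul_of_isOrtho (h := huv.symm), mul_neg,
    neg_mul, neg_neg]

theorem ι_mul_ι_mul_ι_mul_self (huv : Q.IsOrtho u v) (huw : Q.IsOrtho u w)
    (hvw : Q.IsOrtho v w) :
    ι Q u * ι Q v * ι Q w * (ι Q u * ι Q v * ι Q w) = algebraMap R _ (-(Q u * Q v * Q w)) := by
  simp only [mul_assoc, ι_mul_ι_mul_of_isOrtho (h := huv.symm),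
    ι_mul_ι_mul_of_isOrtho (h := huw.symm), ι_mul_ι_mul_of_isOrtho (h := hvw.symm),
    ι_mul_ι_mul_self, ι_sq_scalar, mul_neg, neg_neg, Algebra.smul_def, map_neg, map_mul]

theorem mem_span_one_ι_mul_ι_mul_ι_of_reverse_involute_eq [Invertible (2 : R)]
    (huv : Q.IsOrtho u v) (huw : Q.IsOrtho u w) (hvw : Q.IsOrtho v w)
    (hspan : Submodule.span R {u, v, w} = ⊤) {y : CliffordAlgebra Q}
    (hy : reverse (involute y) = y) :
    y ∈ Submodule.span R {1, ι Q u * ι Q v * ι Q w} := by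
  -- `y = ½ (y + ȳ)`, and `z ↦ z + z̄` kills the monomials of degree 1 and 2.
  let f : CliffordAlgebra Q →ₗ[R] CliffordAlgebra Q :=
    LinearMap.id + reverse ∘ₗ involute.toLinearMap
  have hf : ∀ s ∈ ({1, ι Q u, ι Q v, ι Q w, ι Q u * ι Q v, ι Q u * ι Q w, ι Q v * ι Q w,
      ι Q u * ι Q v * ι Q w} : Set (CliffordAlgebra Q)),
      f s ∈ Submodule.span R {1, ι Q u * ι Q v * ι Q w} := by
    intro s hs
    rcases hs with rfl | rfl | rfl | rfl | rfl | rfl | rfl | rfl <;>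
      simp only [f, LinearMap.add_apply, LinearMap.id_apply, LinearMap.comp_apply,
        AlgHom.toLinearMap_apply, map_one, map_mul, involute_ι, reverse.map_one, map_neg,
        reverse.map_mul, reverse_ι, mul_assoc, neg_mul, mul_neg, neg_neg, add_neg_cancel,
        ι_mul_ι_comm_of_isOrtho huv.symm, ι_mul_ι_comm_of_isOrtho huw.symm,
        ι_mul_ι_comm_of_isOrtho hvw.symm, ι_mul_ι_mul_of_isOrtho (h := huv.symm),
        ← two_smul R, Submodule.zero_mem] <;>
      exact Submodule.smul_mem _ _ (Submodule.subset_span (by simp only [Set.mem_insert_iff,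
        Set.mem_singleton_iff, true_or, or_true]))
  have hfy : f y = (2 : R) • y := by
    change y + reverse (involute y) = _
    rw [hy, two_smul]
  rw [← Submodule.smul_mem_iff'' _ (r := (2 : R)), ← hfy]
  exact (Submodule.span_le (p := (Submodule.span R _).comap f)).mpr hf
    (mem_span_monomials huv huw hvw hspan y)

theorem commute_of_reverse_involute_eq [Invertible (2 : R)]
    (huv : Q.IsOrtho u v) (huw : Q.IsOrtho u w) (hvw : Q.IsOrtho v w)
    (hspan : Submodule.span R {u, v, w} = ⊤) {z : CliffordAlgebra Q}
    (hz : reverse (involute z) = z) (y : CliffordAlgebra Q) : Commute z y := by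
  obtain ⟨p, q, rfl⟩ := Submodule.mem_span_pair.mp
    (mem_span_one_ι_mul_ι_mul_ι_of_reverse_involute_eq huv huw hvw hspan hz)
  exact ((Commute.one_left y).smul_left p).add_left
    ((commute_ι_mul_ι_mul_ι huv huw hvw hspan y).smul_left q)

theorem mul_adjugate_comm_and_mem_range [Invertible (2 : R)]
    (huv : Q.IsOrtho u v) (huw : Q.IsOrtho u w) (hvw : Q.IsOrtho v w)
    (hspan : Submodule.span R {u, v, w} = ⊤) (x : CliffordAlgebra Q) :
    x * (reverse x * involute x * reverse (involute x)) =
        (reverse x * involute x * reverse (involute x)) * x ∧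
      x * (reverse x * involute x * reverse (involute x)) ∈
        Set.range (algebraMap R (CliffordAlgebra Q)) := by
  set x' := reverse (involute x)
  have hxx' : Commute x x' := by
    have hsum := commute_of_reverse_involute_eq huv huw hvw hspan
      (z := x + x') (by rw [map_add, map_add, reverse_involute_reverse_involute, add_comm]) x
    simpa using (hsum.sub_left (Commute.refl x)).symm
  have hr : ∀ y, Commute (reverse x * involute x) y :=
    commute_of_reverse_involute_eq huv huw hvw hspan (by
      rw [reverse_involute_mul, involute_involute, reverse_involute, reverse_reverse])
  have hadj : x * (reverse x * involute x * x') = reverse x * involute x * (x' * x) := by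
    rw [← mul_assoc, ← (hr x).eq, mul_assoc, hxx'.eq, mul_assoc]
  refine ⟨by rw [hadj, ← mul_assoc], ?_⟩
  obtain ⟨p, q, hpq⟩ := Submodule.mem_span_pair.mp
    (mem_span_one_ι_mul_ι_mul_ι_of_reverse_involute_eq huv huw hvw hspan (y := x' * x)
      (by rw [reverse_involute_mul, reverse_involute_reverse_involute]))
  have hr_eq : reverse x * involute x = p • 1 - q • (ι Q u * ι Q v * ι Q w) := by
    rw [← reverse_reverse (involute x), ← reverse.map_mul, ← hpq, map_add, map_smul, map_smul,
      reverse.map_one, reverse_ι_mul_ι_mul_ι huv huw hvw, smul_neg, sub_eq_add_neg]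
  refine ⟨p * p + q * q * (Q u * Q v * Q w), ?_⟩
  rw [hadj, hr_eq, ← hpq]
  simp only [sub_mul, mul_add, smul_mul_smul_comm, one_mul, mul_one,
    ι_mul_ι_mul_ι_mul_self huv huw hvw, Algebra.algebraMap_eq_smul_one]
  module

end OrthogonalTriple

end CliffordAlgebra

/-- In dimension 3 (char K ≠ 2), the adjugate
`adj x = reverse x * involute x * conj x` (the paper's
`Adj(A) = ⟦A⟧₂₃ ⟦A⟧₁₃ ⟦A⟧₁₂`) commutes with `x`, and `x * adj x` is a scalar
(the determinant). -/
theorem adj_dim_three (K V : Type*) [Field K] [AddCommGroup V] [Module K V]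
    [FiniteDimensional K V] (h2 : (2 : K) ≠ 0)
    (hdim : Module.finrank K V = 3)
    (Q : QuadraticForm K V) (x : CliffordAlgebra Q) :
    x * (reverse x * involute x * reverse (involute x)) =
        (reverse x * involute x * reverse (involute x)) * x ∧
      x * (reverse x * involute x * reverse (involute x)) ∈
        Set.range (algebraMap K (CliffordAlgebra Q)) := by
  have : Invertible (2 : K) := invertibleOfNonzero h2
  obtain ⟨e, he⟩ :=
    LinearMap.BilinForm.exists_orthogonal_basis (QuadraticForm.associated_isSymm K Q)
  let e₃ := e.reindex (finCongr hdim)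
  have hortho (i j : Fin 3) (hij : i ≠ j) : Q.IsOrtho (e₃ i) (e₃ j) := by
    simpa [e₃, Function.onFun] using he ((finCongr hdim).symm.injective.ne hij)
  have hspan : Submodule.span K {e₃ 0, e₃ 1, e₃ 2} = ⊤ := by
    rw [← e₃.span_eq]
    congr 1
    ext
    simp [Fin.exists_fin_succ, eq_comm]
  exact mul_adjugate_comm_and_mem_range (hortho 0 1 (by decide)) (hortho 0 2 (by decide))
    (hortho 1 2 (by decide)) hspan x
end

section
/- Let K be a field of characteristic not 2, V a K-vector space of dimension 4, and Q a quadratic form on V. Then for every element x of the Clifford algebra of Q there exist s, d : K such that (reverse x * x) * (algebraMap s - reverse x * x) = algebraMap d. (This is the paper's alternative, non-adjugatable four-dimensional determinant formula Det(A) = ⟦A⟧₂₃ · A · ⟦⟦A⟧₂₃ · A⟧₁₄, with the factor order reversed relative to the adjugatable formula; since ⟦A⟧₂₃·A has only grades {0,1,4}, the grade-negation ⟦·⟧₁₄ of it equals algebraMap s minus it, with s twice its grade-0 coefficient.) -/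
/-!
Fix an orthogonal basis `e₁, e₂, e₃, e₄` of `V`. The Clifford algebra is spanned by the ordered
products `e_{i₁} ⋯ e_{iₖ}`, and `reverse` multiplies such a product by `(-1) ^ (k choose 2)`. As `2`
is invertible, the reverse-fixed element `ξ = reverse x * x` therefore lies in the span of the
products with `k = 0, 1, 4`: `ξ = c + u` with `u = v + p e₁e₂e₃e₄` for a vector `v`. The
pseudoscalar squares to a scalar and, the dimension being even, anticommutes with `v`; so `u²` is
a scalar and `ξ (2c - ξ) = c² - u²`.
-/

open CliffordAlgebra

section Anticommuting

variable {A ι : Type*} [Ring A] {g : ι → A}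

def PairwiseAnticommute (g : ι → A) : Prop :=
  Pairwise fun i j => g i * g j = -(g j * g i)

theorem prod_map_mul_of_notMem (hg : PairwiseAnticommute g) {i : ι} :
    ∀ {t : List ι}, i ∉ t →
      (t.map g).prod * g i = (-1 : ℤ) ^ t.length • (g i * (t.map g).prod)
  | [], _ => by simp
  | j :: t, hi => by
    rw [List.mem_cons, not_or] at hi
    simp only [List.map_cons, List.prod_cons, List.length_cons, pow_succ, mul_assoc]
    rw [prod_map_mul_of_notMem hg hi.2, mul_smul_comm, ← mul_assoc, hg (Ne.symm hi.1)]
    simp [mul_assoc]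

theorem mul_prod_map_of_notMem (hg : PairwiseAnticommute g) {i : ι} {t : List ι} (hi : i ∉ t) :
    g i * (t.map g).prod = (-1 : ℤ) ^ t.length • ((t.map g).prod * g i) := by
  rw [prod_map_mul_of_notMem hg hi, smul_smul, ← pow_add, Even.neg_one_pow ⟨_, rfl⟩, one_smul]

theorem mul_prod_map_of_mem (hg : PairwiseAnticommute g) {l : List ι} (hl : l.Nodup) {i : ι}
    (hi : i ∈ l) :
    g i * (l.map g).prod = (-1 : ℤ) ^ (l.length - 1) • ((l.map g).prod * g i) := by
  obtain ⟨s, t, rfl⟩ := List.append_of_mem hi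
  have hl' := (List.nodup_cons.1 (List.nodup_middle.1 hl)).1
  have hs : i ∉ s := fun h => hl' (List.mem_append_left _ h)
  have ht : i ∉ t := fun h => hl' (List.mem_append_right _ h)
  have hlen : (s ++ i :: t).length - 1 = s.length + t.length := by simp
  simp only [hlen, List.map_append, List.map_cons, List.prod_append, List.prod_cons]
  rw [← mul_assoc, mul_prod_map_of_notMem hg hs, mul_assoc (List.prod _) (g i * _),
    mul_assoc (g i), prod_map_mul_of_notMem hg ht]
  simp only [pow_add, mul_smul, smul_mul_assoc, mul_smul_comm, mul_assoc]
  rw [smul_smul ((-1 : ℤ) ^ t.length), ← pow_add, Even.neg_one_pow ⟨_, rfl⟩, one_smul]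

theorem prod_map_reverse (hg : PairwiseAnticommute g) :
    ∀ {l : List ι}, l.Nodup →
      (l.reverse.map g).prod = (-1 : ℤ) ^ l.length.choose 2 • (l.map g).prod
  | [], _ => by simp
  | i :: t, hl => by
    rw [List.nodup_cons] at hl
    rw [List.reverse_cons, List.map_append, List.prod_append, prod_map_reverse hg hl.2]
    simp only [List.map_cons, List.map_nil, List.prod_cons, List.prod_nil, mul_one,
      List.length_cons, Nat.choose_succ_succ, Nat.choose_one_right]
    rw [smul_mul_assoc, prod_map_mul_of_notMem hg hl.1, smul_smul, ← pow_add, add_comm]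

variable {K : Type*} [CommRing K] [Algebra K A]

theorem prod_map_mul_self_mem_bot (hg : PairwiseAnticommute g)
    (hsq : ∀ i, g i * g i ∈ (⊥ : Subalgebra K A)) :
    ∀ {l : List ι}, l.Nodup → (l.map g).prod * (l.map g).prod ∈ (⊥ : Subalgebra K A)
  | [], _ => by simp
  | i :: t, hl => by
    rw [List.nodup_cons] at hl
    have h : (-1 : ℤ) ^ t.length • (g i * g i * ((t.map g).prod * (t.map g).prod)) ∈
        (⊥ : Subalgebra K A) :=
      Subalgebra.zsmul_mem _
        (Subalgebra.mul_mem _ (hsq i) (prod_map_mul_self_mem_bot hg hsq hl.2)) _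
    simpa only [List.map_cons, List.prod_cons, mul_assoc, ← mul_assoc (t.map g).prod,
      prod_map_mul_of_notMem hg hl.1, smul_mul_assoc, mul_smul_comm] using h

variable [LinearOrder ι]

def sortedProds (g : ι → A) : Set A :=
  (fun l : List ι => (l.map g).prod) '' {l | l.Pairwise (· < ·)}

def reverseEvenSortedProds (g : ι → A) : Set A :=
  (fun l : List ι => (l.map g).prod) '' {l | l.Pairwise (· < ·) ∧ Even (l.length.choose 2)}

-- The bound `l' ⊆ i :: l` is what keeps `j :: l'` sorted in the recursive case.
theorem exists_mul_prod_map_eq_smul (hg : PairwiseAnticommute g)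
    (hsq : ∀ i, g i * g i ∈ (⊥ : Subalgebra K A)) (i : ι) :
    ∀ {l : List ι}, l.Pairwise (· < ·) →
      ∃ (r : K) (l' : List ι), l'.Pairwise (· < ·) ∧ l' ⊆ i :: l ∧
        g i * (l.map g).prod = r • (l'.map g).prod
  | [], _ => ⟨1, [i], by simp, by simp, by simp⟩
  | j :: t, hl => by
    rw [List.pairwise_cons] at hl
    rcases lt_trichotomy i j with hij | rfl | hji
    · refine ⟨1, i :: j :: t, ?_, by simp, by simp⟩
      exact List.pairwise_cons.2 ⟨by simpa [hij] using fun k hk => hij.trans (hl.1 k hk),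
        List.pairwise_cons.2 hl⟩
    · obtain ⟨r, hr⟩ := Algebra.mem_bot.1 (hsq i)
      refine ⟨r, t, hl.2, fun k hk => by simp [hk], ?_⟩
      rw [List.map_cons, List.prod_cons, ← mul_assoc, ← hr, Algebra.smul_def]
    · obtain ⟨r, l', hl', hmem, heq⟩ := exists_mul_prod_map_eq_smul hg hsq i hl.2
      refine ⟨-r, j :: l', ?_, ?_, ?_⟩
      · refine List.pairwise_cons.2 ⟨fun k hk => ?_, hl'⟩
        rcases List.mem_cons.1 (hmem hk) with rfl | hk
        exacts [hji, hl.1 k hk]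
      · intro k hk
        rcases List.mem_cons.1 hk with rfl | hk
        · simp
        · rcases List.mem_cons.1 (hmem hk) with rfl | hk <;> simp [hk]
      · rw [List.map_cons, List.prod_cons, List.map_cons, List.prod_cons, ← mul_assoc,
          hg hji.ne', neg_mul, mul_assoc, heq, mul_smul_comm, neg_smul]

theorem apply_mul_mem_span_sortedProds (hg : PairwiseAnticommute g)
    (hsq : ∀ i, g i * g i ∈ (⊥ : Subalgebra K A)) (i : ι) {a : A}
    (ha : a ∈ Submodule.span K (sortedProds g)) :
    g i * a ∈ Submodule.span K (sortedProds g) := by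
  induction ha using Submodule.span_induction with
  | mem a ha =>
    obtain ⟨l, hl, rfl⟩ := ha
    obtain ⟨r, l', hl', -, h⟩ := exists_mul_prod_map_eq_smul hg hsq i hl
    rw [h]
    exact Submodule.smul_mem _ _ (Submodule.subset_span ⟨l', hl', rfl⟩)
  | zero => simp
  | add a b _ _ ha hb => rw [mul_add]; exact add_mem ha hb
  | smul r a _ ha => rw [mul_smul_comm]; exact Submodule.smul_mem _ _ ha

theorem prod_map_mul_mem_span_sortedProds (hg : PairwiseAnticommute g)
    (hsq : ∀ i, g i * g i ∈ (⊥ : Subalgebra K A)) (l : List ι) {a : A}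
    (ha : a ∈ Submodule.span K (sortedProds g)) :
    (l.map g).prod * a ∈ Submodule.span K (sortedProds g) := by
  induction l with
  | nil => simpa using ha
  | cons i l ih => simpa [mul_assoc] using apply_mul_mem_span_sortedProds hg hsq i ih

theorem mul_mem_span_sortedProds (hg : PairwiseAnticommute g)
    (hsq : ∀ i, g i * g i ∈ (⊥ : Subalgebra K A)) {a b : A}
    (ha : a ∈ Submodule.span K (sortedProds g)) (hb : b ∈ Submodule.span K (sortedProds g)) :
    a * b ∈ Submodule.span K (sortedProds g) := by
  induction ha using Submodule.span_induction with
  | mem a ha =>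
    obtain ⟨l, -, rfl⟩ := ha
    exact prod_map_mul_mem_span_sortedProds hg hsq l hb
  | zero => simp
  | add a c _ _ ha hc => rw [add_mul]; exact add_mem ha hc
  | smul r a _ ha => rw [smul_mul_assoc]; exact Submodule.smul_mem _ _ ha

theorem adjoin_range_le_span_sortedProds (hg : PairwiseAnticommute g)
    (hsq : ∀ i, g i * g i ∈ (⊥ : Subalgebra K A)) :
    Subalgebra.toSubmodule (Algebra.adjoin K (Set.range g)) ≤
      Submodule.span K (sortedProds g) :=
  let S : Subalgebra K A := (Submodule.span K (sortedProds g)).toSubalgebra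
    (Submodule.subset_span ⟨[], by simp, by simp⟩)
    (fun _ _ => mul_mem_span_sortedProds hg hsq)
  Algebra.adjoin_le (S := S) (by
    rintro _ ⟨i, rfl⟩
    exact Submodule.subset_span ⟨[i], by simp, by simp⟩)

end Anticommuting

section Scalars

variable {K A : Type*} [CommRing K] [Ring A] [Algebra K A]

theorem add_mul_self_mem_bot {a b : A} (ha : a * a ∈ (⊥ : Subalgebra K A))
    (hb : b * b ∈ (⊥ : Subalgebra K A)) (hab : a * b + b * a = 0) :
    (a + b) * (a + b) ∈ (⊥ : Subalgebra K A) := by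
  have h : (a + b) * (a + b) = a * a + b * b + (a * b + b * a) := by noncomm_ring
  rw [h, hab, add_zero]
  exact add_mem ha hb

theorem algebraMap_add_mul_algebraMap_two_mul_sub (c : K) (u : A) :
    (algebraMap K A c + u) * (algebraMap K A (2 * c) - (algebraMap K A c + u)) =
      algebraMap K A (c * c) - u * u := by
  rw [two_mul, map_add, add_sub_add_left_eq_sub, add_mul, mul_sub, mul_sub, ← map_mul,
    Algebra.commutes c u]
  abel

end Scalars

theorem List.Pairwise.eq_finRange {n : ℕ} {l : List (Fin n)} (hl : l.Pairwise (· < ·))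
    (hlen : l.length = n) : l = List.finRange n :=
  List.Perm.eq_of_sortedLE hl.sortedLT.sortedLE (List.sortedLT_finRange n).sortedLE
    ((hl.nodup.subperm fun x _ => List.mem_finRange x).perm_of_length_le (by simp [hlen]))

namespace CliffordAlgebra

variable {K V κ : Type*} [Field K] [AddCommGroup V] [Module K V] {Q : QuadraticForm K V}

theorem adjoin_range_ι_comp_basis (b : Module.Basis κ K V) :
    Algebra.adjoin K (Set.range (ι Q ∘ b)) = ⊤ := by
  rw [eq_top_iff, ← adjoin_range_ι]
  refine Algebra.adjoin_le ?_
  rintro _ ⟨v, rfl⟩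
  have hv : ι Q v ∈ (Submodule.span K (Set.range b)).map (ι Q) :=
    ⟨v, by simp [b.span_eq], rfl⟩
  rw [Submodule.map_span, ← Set.range_comp] at hv
  exact Algebra.span_le_adjoin K _ hv

variable {b : Module.Basis κ K V}

theorem pairwiseAnticommute_ι_comp_basis [Invertible (2 : K)]
    (hb : (QuadraticMap.associated Q).IsOrthoᵢ b) : PairwiseAnticommute (ι Q ∘ b) :=
  fun _ _ hij => ι_mul_ι_comm_of_isOrtho (QuadraticMap.associated_isOrtho.1 (hb hij))

theorem ι_comp_basis_mul_self_mem_bot (i : κ) :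
    (ι Q ∘ b) i * (ι Q ∘ b) i ∈ (⊥ : Subalgebra K (CliffordAlgebra Q)) :=
  ⟨Q (b i), (ι_sq_scalar Q (b i)).symm⟩

theorem reverse_prod_map_ι_comp_basis [Invertible (2 : K)]
    (hb : (QuadraticMap.associated Q).IsOrthoᵢ b) {l : List κ} (hl : l.Nodup) :
    reverse (l.map (ι Q ∘ b)).prod =
      (-1 : ℤ) ^ l.length.choose 2 • (l.map (ι Q ∘ b)).prod := by
  rw [← prod_map_reverse (pairwiseAnticommute_ι_comp_basis hb) hl, ← List.map_map,
    reverse_prod_map_ι, List.map_reverse, List.map_map]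

theorem mem_span_of_reverse_eq_self [LinearOrder κ] [Invertible (2 : K)]
    (hb : (QuadraticMap.associated Q).IsOrthoᵢ b) {z : CliffordAlgebra Q} (hz : reverse z = z) :
    z ∈ Submodule.span K (reverseEvenSortedProds (ι Q ∘ b)) := by
  set E := Submodule.span K (reverseEvenSortedProds (ι Q ∘ b))
  have hsym : Submodule.span K (sortedProds (ι Q ∘ b)) ≤ E.comap (LinearMap.id + reverse) := by
    refine Submodule.span_le.2 ?_
    rintro _ ⟨l, hl, rfl⟩
    simp only [SetLike.mem_coe, Submodule.mem_comap, LinearMap.add_apply, LinearMap.id_apply,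
      reverse_prod_map_ι_comp_basis hb hl.nodup]
    by_cases hC : Even (l.length.choose 2)
    · rw [hC.neg_one_pow, one_smul]
      exact add_mem (Submodule.subset_span ⟨l, ⟨hl, hC⟩, rfl⟩)
        (Submodule.subset_span ⟨l, ⟨hl, hC⟩, rfl⟩)
    · rw [(Nat.not_even_iff_odd.1 hC).neg_one_pow, neg_one_zsmul, add_neg_cancel]
      exact E.zero_mem
  have hz' : z ∈ Submodule.span K (sortedProds (ι Q ∘ b)) :=
    adjoin_range_le_span_sortedProds (pairwiseAnticommute_ι_comp_basis hb)
      ι_comp_basis_mul_self_mem_bot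
      (by rw [adjoin_range_ι_comp_basis]; trivial)
  have h2z : (2 : K) • z ∈ E := by
    simpa [hz, two_smul] using hsym hz'
  simpa [smul_smul] using E.smul_mem (⅟2 : K) h2z

theorem ι_mul_prod_finRange_add_swap [Invertible (2 : K)] {n : ℕ} (hn : Even n)
    {b : Module.Basis (Fin n) K V} (hb : (QuadraticMap.associated Q).IsOrthoᵢ b) (v : V) :
    ι Q v * ((List.finRange n).map (ι Q ∘ b)).prod +
      ((List.finRange n).map (ι Q ∘ b)).prod * ι Q v = 0 := by
  set ω := ((List.finRange n).map (ι Q ∘ b)).prod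
  suffices h : LinearMap.mulRight K ω ∘ₗ ι Q + LinearMap.mulLeft K ω ∘ₗ ι Q = 0 from
    LinearMap.congr_fun h v
  refine b.ext fun i => ?_
  have hodd : Odd (n - 1) := Nat.Even.sub_odd (Fin.pos i) hn odd_one
  have h := mul_prod_map_of_mem (pairwiseAnticommute_ι_comp_basis hb) (List.nodup_finRange n)
    (List.mem_finRange i)
  rw [List.length_finRange, hodd.neg_one_pow, neg_one_zsmul] at h
  simp only [LinearMap.add_apply, LinearMap.comp_apply, LinearMap.mulRight_apply,
    LinearMap.mulLeft_apply, LinearMap.zero_apply]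
  exact (congrArg (· + ω * ι Q (b i)) h).trans (neg_add_cancel _)

theorem exists_eq_algebraMap_add_mul_self_mem_bot_of_reverse_eq_self [Invertible (2 : K)]
    {b : Module.Basis (Fin 4) K V} (hb : (QuadraticMap.associated Q).IsOrthoᵢ b)
    {z : CliffordAlgebra Q} (hz : reverse z = z) :
    ∃ (c : K) (u : CliffordAlgebra Q),
      z = algebraMap K _ c + u ∧ u * u ∈ (⊥ : Subalgebra K (CliffordAlgebra Q)) := by
  set ω := ((List.finRange 4).map (ι Q ∘ b)).prod
  have hW : Submodule.span K (reverseEvenSortedProds (ι Q ∘ b)) ≤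
      K ∙ 1 ⊔ (LinearMap.range (ι Q) ⊔ K ∙ ω) := by
    refine Submodule.span_le.2 ?_
    rintro _ ⟨l, ⟨hl, hC⟩, rfl⟩
    have hlen : l.length = 0 ∨ l.length = 1 ∨ l.length = 4 := by
      have := hl.nodup.length_le_card
      rw [Fintype.card_fin] at this
      interval_cases h : l.length <;> simp_all (config := {decide := true})
    rcases hlen with h | h | h
    · rw [List.length_eq_zero_iff.1 h]
      exact Submodule.mem_sup_left (Submodule.mem_span_singleton_self _)
    · obtain ⟨i, rfl⟩ := List.length_eq_one_iff.1 h
      exact Submodule.mem_sup_right (Submodule.mem_sup_left ⟨b i, by simp⟩)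
    · rw [hl.eq_finRange h]
      exact Submodule.mem_sup_right
        (Submodule.mem_sup_right (Submodule.mem_span_singleton_self _))
  obtain ⟨_, hc, _, hu, rfl⟩ := Submodule.mem_sup.1 (hW (mem_span_of_reverse_eq_self hb hz))
  obtain ⟨c, rfl⟩ := Submodule.mem_span_singleton.1 hc
  obtain ⟨_, ⟨v, rfl⟩, _, hp, rfl⟩ := Submodule.mem_sup.1 hu
  obtain ⟨p, rfl⟩ := Submodule.mem_span_singleton.1 hp
  refine ⟨c, ι Q v + p • ω, by rw [Algebra.algebraMap_eq_smul_one], ?_⟩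
  refine add_mul_self_mem_bot ⟨Q v, (ι_sq_scalar Q v).symm⟩ ?_ ?_
  · rw [smul_mul_smul_comm]
    exact Subalgebra.smul_mem _
      (prod_map_mul_self_mem_bot (pairwiseAnticommute_ι_comp_basis hb)
        ι_comp_basis_mul_self_mem_bot (List.nodup_finRange 4)) _
  · rw [mul_smul_comm, smul_mul_assoc, ← smul_add, ι_mul_prod_finRange_add_swap (by decide) hb,
      smul_zero]

end CliffordAlgebra

/-- In dimension 4 (char K ≠ 2), the paper's alternative, non-adjugatable
determinant formula `Det(A) = ⟦A⟧₂₃ A ⟦⟦A⟧₂₃ A⟧₁₄`: with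
`ξ = reverse x * x` (grades {0,1,4}), `ξ * (algebraMap s - ξ)` is a scalar. -/
theorem det_dim_four_nonadjugatable (K V : Type*) [Field K] [AddCommGroup V]
    [Module K V] [FiniteDimensional K V] (h2 : (2 : K) ≠ 0)
    (hdim : Module.finrank K V = 4)
    (Q : QuadraticForm K V) (x : CliffordAlgebra Q) :
    ∃ s d : K,
      (reverse x * x) * (algebraMap K (CliffordAlgebra Q) s - reverse x * x) =
        algebraMap K (CliffordAlgebra Q) d := by
  have : Invertible (2 : K) := invertibleOfNonzero h2
  obtain ⟨b, hb⟩ := LinearMap.BilinForm.exists_orthogonal_basis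
    (QuadraticForm.associated_isSymm K Q)
  have hb4 : (QuadraticMap.associated Q).IsOrthoᵢ (b.reindex (finCongr hdim)) := by
    rw [Module.Basis.coe_reindex]
    exact fun i j hij => hb ((finCongr hdim).symm.injective.ne hij)
  obtain ⟨c, u, hξ, hu⟩ := exists_eq_algebraMap_add_mul_self_mem_bot_of_reverse_eq_self hb4
    (z := reverse x * x) (by rw [reverse.map_mul, reverse_reverse])
  obtain ⟨d, hd⟩ := Algebra.mem_bot.1 hu
  refine ⟨2 * c, c * c - d, ?_⟩
  rw [hξ, algebraMap_add_mul_algebraMap_two_mul_sub, map_sub, hd]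
end
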